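/- arXiv:2504.04097 — 2 statements merged into one kernel-verified Lean document; each statement's English description precedes it below -/
import Mathlib

section
/- (Sample-based lower bound on VaR.) Let Y be a real-valued random variable, τ, δ ∈ (0,1), and let Y^(1), …, Y^(N) be i.i.d. copies of Y with N ≥ ⌈ln(δ)/ln(1−τ)⌉. Let k ∈ {1,…,N} be any index satisfying Bin(k−1; N, 1−τ) ≥ 1 − δ, and let η^k denote the k-th largest of the samples Y^(1), …, Y^(N). Then Pr[η^k ≤ VaR_τ(Y)] ≥ 1 − δ. -/
open MeasureTheory ProbabilityTheory Real
open ENNReal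

/-- The cumulative distribution function of `Y` under `μ`: `F_Y(y) = Pr[Y ≤ y]`. -/
noncomputable def cdfOf {Ω : Type*} [MeasurableSpace Ω] (μ : Measure Ω) (Y : Ω → ℝ) (y : ℝ) : ℝ :=
  (μ {ω | Y ω ≤ y}).toReal

/-- Value-at-Risk at level `τ`: `VaR_τ(Y) = sup {y | F_Y(y) ≤ τ}`. -/
noncomputable def VaR {Ω : Type*} [MeasurableSpace Ω] (μ : Measure Ω) (Y : Ω → ℝ) (τ : ℝ) : ℝ :=
  sSup {y : ℝ | cdfOf μ Y y ≤ τ}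

/-- Conditional-Value-at-Risk at level `τ`: `CVaR_τ(Y) = (1/τ) ∫₀^τ VaR_ν(Y) dν`. -/
noncomputable def CVaR {Ω : Type*} [MeasurableSpace Ω] (μ : Measure Ω) (Y : Ω → ℝ) (τ : ℝ) : ℝ :=
  (1 / τ) * ∫ ν in Set.Ioo (0:ℝ) τ, VaR μ Y ν

/-- The `k`-th largest value (1-indexed) among `f 0, …, f (N-1)`. -/
noncomputable def kthLargest {N : ℕ} (f : Fin N → ℝ) (k : ℕ) : ℝ :=
  if h : N = 0 then 0
  else (f ∘ Tuple.sort f) ⟨N - max k 1, by omega⟩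

/-- The empirical CDF of the samples `f 0, …, f (N-1)`. -/
noncomputable def empCDF {N : ℕ} (f : Fin N → ℝ) (y : ℝ) : ℝ :=
  (Finset.univ.filter (fun i => f i ≤ y)).card / N

/-- The CDF of a Binomial(m, p) random variable evaluated at `k`:
`Bin(k; m, p) = ∑_{j=0}^k C(m,j) pʲ (1-p)^{m-j}`. -/
noncomputable def binCDF (m : ℕ) (p : ℝ) (k : ℕ) : ℝ :=
  ∑ j ∈ Finset.range (k + 1), (m.choose j : ℝ) * p ^ j * (1 - p) ^ (m - j)


lemma binCDF_hasDeriv (N m : ℕ) (hm : m < N) (p : ℝ) :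
    HasDerivAt (fun q => binCDF N q m)
      (-((N : ℝ) * ((N-1).choose m) * p ^ m * (1 - p) ^ (N - 1 - m))) p := by
  have hterm : ∀ j : ℕ, HasDerivAt (fun q : ℝ => (N.choose j : ℝ) * q ^ j * (1 - q) ^ (N - j))
      (((N.choose j : ℝ) * ((j:ℝ) * p ^ (j-1))) * (1 - p) ^ (N - j)
        + ((N.choose j : ℝ) * p ^ j) * (((N - j : ℕ):ℝ) * (1 - p) ^ (N - j - 1) * (-1))) p := by
    intro j
    have h1 : HasDerivAt (fun q : ℝ => (N.choose j : ℝ) * q ^ j) ((N.choose j : ℝ) * ((j:ℝ) * p ^ (j-1))) p :=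
      (hasDerivAt_pow j p).const_mul _
    have h2 : HasDerivAt (fun q : ℝ => (1 - q) ^ (N - j))
        (((N - j : ℕ):ℝ) * (1 - p) ^ (N - j - 1) * (-1)) p := by
      have hinner : HasDerivAt (fun q : ℝ => 1 - q) (-1) p := by
        simpa using (hasDerivAt_id p).const_sub 1
      exact (hasDerivAt_pow (N - j) (1 - p)).comp p hinner
    exact h1.mul h2
  have hsum : HasDerivAt (fun q => binCDF N q m)
      (∑ j ∈ Finset.range (m+1),
        (((N.choose j : ℝ) * ((j:ℝ) * p ^ (j-1))) * (1 - p) ^ (N - j)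
        + ((N.choose j : ℝ) * p ^ j) * (((N - j : ℕ):ℝ) * (1 - p) ^ (N - j - 1) * (-1)))) p := by
    unfold binCDF
    exact HasDerivAt.fun_sum (fun j _ => hterm j)
  convert hsum using 1
  have hHG : ∀ j : ℕ,
      ((N.choose (j+1) : ℝ) * (((j+1:ℕ):ℝ) * p ^ j)) * (1 - p) ^ (N - (j+1))
        = (N : ℝ) * ((N-1).choose j) * p ^ j * (1 - p) ^ (N - 1 - j) := by
    intro j
    have hco : (N:ℝ) * ((N-1).choose j) = (N.choose (j+1) : ℝ) * ((j+1:ℕ):ℝ) := by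
      have h2 := Nat.add_one_mul_choose_eq (N-1) j
      have hN1 : N - 1 + 1 = N := by omega
      rw [hN1] at h2
      exact_mod_cast congrArg (Nat.cast : ℕ → ℝ) h2
    have hexp : N - (j+1) = N - 1 - j := by omega
    rw [hexp]
    push_cast at hco ⊢
    linear_combination (-(p ^ j * (1 - p) ^ (N - 1 - j))) * hco
  have hG : ∀ j : ℕ, ((N.choose j : ℝ) * p ^ j) * (((N - j : ℕ):ℝ) * (1 - p) ^ (N - j - 1) * (-1))
      = -((N : ℝ) * ((N-1).choose j) * p ^ j * (1 - p) ^ (N - 1 - j)) := by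
    intro j
    have h2 : (N - j) * N.choose j = N * (N-1).choose j := by
      calc (N - j) * N.choose j = N.choose j * (N - j) := Nat.mul_comm _ _
        _ = N.choose (j+1) * (j+1) := (Nat.choose_succ_right_eq N j).symm
        _ = N * (N-1).choose j := by
            have h3 := Nat.add_one_mul_choose_eq (N-1) j
            have hN1 : N - 1 + 1 = N := by omega
            rw [hN1] at h3
            exact h3.symm
    have hco : ((N - j : ℕ):ℝ) * (N.choose j : ℝ) = (N:ℝ) * ((N-1).choose j) := by
      exact_mod_cast congrArg (Nat.cast : ℕ → ℝ) h2
    have hexp : N - j - 1 = N - 1 - j := by omega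
    rw [hexp]
    linear_combination (-(p ^ j * (1 - p) ^ (N - 1 - j))) * hco
  rw [Finset.sum_add_distrib]
  have e1 : ∑ j ∈ Finset.range (m+1), ((N.choose j : ℝ) * ((j:ℝ) * p ^ (j-1))) * (1 - p) ^ (N - j)
      = ∑ j ∈ Finset.range m, (N : ℝ) * ((N-1).choose j) * p ^ j * (1 - p) ^ (N - 1 - j) := by
    rw [Finset.sum_range_succ']
    rw [show ((N.choose 0 : ℝ) * (((0:ℕ):ℝ) * p ^ (0-1))) * (1 - p) ^ (N - 0) = 0 by norm_num,
      add_zero]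
    exact Finset.sum_congr rfl fun x _ => by rw [Nat.add_sub_cancel]; exact hHG x
  have e2 : ∑ j ∈ Finset.range (m+1), ((N.choose j : ℝ) * p ^ j) * (((N - j : ℕ):ℝ) * (1 - p) ^ (N - j - 1) * (-1))
      = -∑ j ∈ Finset.range (m+1), (N : ℝ) * ((N-1).choose j) * p ^ j * (1 - p) ^ (N - 1 - j) := by
    rw [← Finset.sum_neg_distrib]
    exact Finset.sum_congr rfl fun j _ => hG j
  rw [e1, e2, Finset.sum_range_succ]
  ring


lemma binCDF_anti (N m : ℕ) (hm : m < N) {p q : ℝ} (hp : 0 ≤ p) (hpq : p ≤ q) (hq : q ≤ 1) :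
    binCDF N q m ≤ binCDF N p m := by
  have hdiff : Differentiable ℝ (fun t => binCDF N t m) :=
    fun x => (binCDF_hasDeriv N m hm x).differentiableAt
  have anti : AntitoneOn (fun t => binCDF N t m) (Set.Icc 0 1) := by
    apply antitoneOn_of_deriv_nonpos (convex_Icc 0 1) hdiff.continuous.continuousOn
      (fun x _ => (hdiff x).differentiableWithinAt)
    intro x hx
    rw [(binCDF_hasDeriv N m hm x).deriv]
    rw [interior_Icc, Set.mem_Ioo] at hx
    have h1 : 0 ≤ x := le_of_lt hx.1
    have h2 : (0:ℝ) ≤ 1 - x := by linarith [hx.2]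
    have : (0:ℝ) ≤ (N : ℝ) * ((N-1).choose m) * x ^ m * (1 - x) ^ (N - 1 - m) := by positivity
    linarith
  exact anti ⟨hp, le_trans hpq hq⟩ ⟨le_trans hp hpq, hq⟩ hpq

lemma tau_le_cdf_VaR {Ω : Type*} [MeasurableSpace Ω] (μ : Measure Ω) [IsProbabilityMeasure μ]
    (Y0 : Ω → ℝ) (hY0 : Measurable Y0) (τ : ℝ) (hτ0 : 0 < τ) (hτ1 : τ < 1) :
    τ ≤ cdfOf μ Y0 (VaR μ Y0 τ) := by
  set ν := μ.map Y0 with hν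
  have hνP : IsProbabilityMeasure ν := Measure.isProbabilityMeasure_map hY0.aemeasurable
  have hcdf : ∀ y, cdfOf μ Y0 y = cdf ν y := fun y => by
    rw [cdf_eq_real, measureReal_def, hν, Measure.map_apply hY0 measurableSet_Iic, cdfOf]
    rfl
  set S := {y : ℝ | cdfOf μ Y0 y ≤ τ} with hS
  have hSbdd : BddAbove S := by
    obtain ⟨B, hB⟩ := Filter.eventually_atTop.mp ((tendsto_cdf_atTop ν).eventually_const_lt hτ1)
    refine ⟨B, fun y hy => ?_⟩
    by_contra hyB
    push_neg at hyB
    have h1 := hB y (le_of_lt hyB)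
    rw [hS, Set.mem_setOf_eq, hcdf] at hy
    linarith
  by_contra hlt
  push_neg at hlt
  have hrc : Filter.Tendsto (cdf ν) (nhdsWithin (VaR μ Y0 τ) (Set.Ici (VaR μ Y0 τ)))
      (nhds (cdf ν (VaR μ Y0 τ))) := (cdf ν).right_continuous _
  have hev : ∀ᶠ y in nhdsWithin (VaR μ Y0 τ) (Set.Ioi (VaR μ Y0 τ)), cdf ν y < τ := by
    have h' : ∀ᶠ y in nhdsWithin (VaR μ Y0 τ) (Set.Ici (VaR μ Y0 τ)), cdf ν y < τ :=
      hrc.eventually (eventually_lt_nhds (by rw [← hcdf]; exact hlt))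
    exact h'.filter_mono (nhdsWithin_mono _ Set.Ioi_subset_Ici_self)
  obtain ⟨y, hy1, hy2⟩ := (hev.and self_mem_nhdsWithin).exists
  have hyS : y ∈ S := by rw [hS, Set.mem_setOf_eq, hcdf]; exact le_of_lt hy1
  have : y ≤ VaR μ Y0 τ := le_csSup hSbdd hyS
  linarith

lemma kthLargest_le {N k : ℕ} (hk1 : 1 ≤ k) (hkN : k ≤ N) (f : Fin N → ℝ) (v : ℝ)
    (h : N - k + 1 ≤ (Finset.univ.filter fun i => f i ≤ v).card) :
    kthLargest f k ≤ v := by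
  have hN0 : N ≠ 0 := by omega
  rw [kthLargest, dif_neg hN0]
  set σ := Tuple.sort f with hσ
  have hcard : (Finset.univ.filter fun i => f i ≤ v).card
      = (Finset.univ.filter fun j => f (σ j) ≤ v).card := by
    have himg : (Finset.univ.filter fun i => f i ≤ v)
        = (Finset.univ.filter fun j => f (σ j) ≤ v).image σ := by
      ext i
      simp only [Finset.mem_filter, Finset.mem_univ, true_and, Finset.mem_image]
      constructor
      · intro hi
        exact ⟨σ.symm i, by simpa using hi, by simp⟩
      · rintro ⟨j, hj, rfl⟩
        exact hj
    rw [himg, Finset.card_image_of_injective _ σ.injective]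
  by_contra hgt
  push_neg at hgt
  have mono := Tuple.monotone_sort f
  have hsmall : ∀ j : Fin N, f (σ j) ≤ v → (j : ℕ) < N - k := by
    intro j hj
    by_contra h'
    push_neg at h'
    have hle : (⟨N - max k 1, by omega⟩ : Fin N) ≤ j := by
      rw [Fin.le_def]
      simp only []
      omega
    have := mono hle
    simp only [Function.comp_apply] at this
    exact absurd (le_trans this hj) (not_le.mpr hgt)
  have hsub : (Finset.univ.filter fun j : Fin N => f (σ j) ≤ v)
      ⊆ (Finset.univ.filter fun j : Fin N => (j : ℕ) < N - k) := by
    intro j hj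
    simp only [Finset.mem_filter, Finset.mem_univ, true_and] at hj ⊢
    exact hsmall j hj
  have hcard2 : (Finset.univ.filter fun j : Fin N => (j : ℕ) < N - k).card = N - k := by
    have : (Finset.univ.filter fun j : Fin N => (j : ℕ) < N - k)
        = Finset.univ.image (Fin.castLE (by omega : N - k ≤ N)) := by
      ext j
      simp only [Finset.mem_filter, Finset.mem_univ, true_and, Finset.mem_image]
      constructor
      · intro hj
        exact ⟨⟨j, hj⟩, rfl⟩
      · rintro ⟨i, rfl⟩
        exact i.isLt
    rw [this, Finset.card_image_of_injective _ (Fin.castLE_injective _), Finset.card_univ,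
      Fintype.card_fin]
  have := Finset.card_le_card hsub
  omega

open Classical in
lemma count_measure {Ω : Type*} [MeasurableSpace Ω] (μ : Measure Ω) [IsProbabilityMeasure μ]
    {N : ℕ} (A : Fin N → Set Ω) (hA : ∀ i, MeasurableSet (A i)) (R : ℝ≥0∞)
    (hprod : ∀ T : Finset (Fin N),
      μ (⋂ i, (if i ∈ T then A i else (A i)ᶜ)) = R ^ T.card * (1 - R) ^ (N - T.card))
    (m : ℕ) :
    μ {ω | m ≤ (Finset.univ.filter fun i => ω ∈ A i).card}
      = ∑ j ∈ Finset.Icc m N, (N.choose j : ℝ≥0∞) * R ^ j * (1 - R) ^ (N - j) := by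
  classical
  set E : Finset (Fin N) → Set Ω := fun T => ⋂ i, (if i ∈ T then A i else (A i)ᶜ) with hEdef
  have hE : ∀ T : Finset (Fin N), E T = {ω | (Finset.univ.filter fun i => ω ∈ A i) = T} := by
    intro T
    ext ω
    simp only [hEdef, Set.mem_iInter, Set.mem_setOf_eq, Finset.ext_iff, Finset.mem_filter,
      Finset.mem_univ, true_and]
    constructor
    · intro h i
      have := h i
      by_cases hi : i ∈ T <;> simp [hi] at this ⊢ <;> tauto
    · intro h i
      have := h i
      by_cases hi : i ∈ T <;> simp [hi] at this ⊢ <;> tauto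
  have hmeasE : ∀ T, MeasurableSet (E T) := by
    intro T
    refine MeasurableSet.iInter fun i => ?_
    by_cases hi : i ∈ T <;> simp only [hi, if_true, if_false] <;>
      [exact hA i; exact (hA i).compl]
  set F : Finset (Finset (Fin N)) := Finset.univ.filter (fun T => m ≤ T.card) with hF
  have hunion : {ω | m ≤ (Finset.univ.filter fun i => ω ∈ A i).card} = ⋃ T ∈ F, E T := by
    ext ω
    simp only [Set.mem_setOf_eq, Set.mem_iUnion, hE, hF, Finset.mem_filter, Finset.mem_univ,
      true_and]
    constructor
    · intro h
      exact ⟨Finset.univ.filter fun i => ω ∈ A i, h, rfl⟩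
    · rintro ⟨T, hT, rfl⟩
      exact hT
  rw [hunion, measure_biUnion_finset ?disj (fun T _ => hmeasE T)]
  case disj =>
    intro T hT T' hT' hne
    rw [Function.onFun, Set.disjoint_left]
    intro ω hω hω'
    rw [hE] at hω hω'
    exact hne (hω ▸ hω')
  have hstep : ∀ T ∈ F, μ (E T) = R ^ T.card * (1 - R) ^ (N - T.card) := fun T _ => hprod T
  rw [Finset.sum_congr rfl hstep]
  have hFsplit : F = (Finset.Icc m N).biUnion (fun j => Finset.powersetCard j Finset.univ) := by
    ext T
    simp only [hF, Finset.mem_filter, Finset.mem_univ, true_and, Finset.mem_biUnion,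
      Finset.mem_Icc, Finset.mem_powersetCard_univ]
    constructor
    · intro h
      exact ⟨T.card, ⟨h, Finset.card_le_univ T |>.trans_eq (Finset.card_univ.trans (Fintype.card_fin N))⟩, rfl⟩
    · rintro ⟨j, ⟨hj1, _⟩, rfl⟩
      exact hj1
  rw [hFsplit, Finset.sum_biUnion]
  · refine Finset.sum_congr rfl fun j hj => ?_
    have : ∀ T ∈ Finset.powersetCard j (Finset.univ : Finset (Fin N)),
        R ^ T.card * (1 - R) ^ (N - T.card) = R ^ j * (1 - R) ^ (N - j) := by
      intro T hT
      rw [Finset.mem_powersetCard_univ] at hT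
      rw [hT]
    rw [Finset.sum_congr rfl this, Finset.sum_const, Finset.card_powersetCard, Finset.card_univ,
      Fintype.card_fin, nsmul_eq_mul, mul_assoc]
  · intro j hj j' hj' hne
    rw [Function.onFun, Finset.disjoint_left]
    intro T hT hT'
    rw [Finset.mem_powersetCard_univ] at hT hT'
    exact hne (hT ▸ hT')

/-- Sample-based lower bound on VaR: For i.i.d. copies `Y⁽¹⁾,…,Y⁽ᴺ⁾` of `Y`
with `N ≥ ⌈ln δ / ln(1-τ)⌉`, and any `k ∈ {1,…,N}` with `Bin(k-1; N, 1-τ) ≥ 1 - δ`,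
the `k`-th largest sample `η^k` satisfies `Pr[η^k ≤ VaR_τ(Y)] ≥ 1 - δ`. -/
theorem sample_var_lower_bound {Ω : Type*} [MeasurableSpace Ω]
    (μ : Measure Ω) [IsProbabilityMeasure μ] (Y0 : Ω → ℝ) (hY0 : Measurable Y0)
    (τ δ : ℝ) (hτ : τ ∈ Set.Ioo (0:ℝ) 1) (hδ : δ ∈ Set.Ioo (0:ℝ) 1)
    {N : ℕ} (hN : Real.log δ / Real.log (1 - τ) ≤ (N : ℝ))
    (Y : Fin N → Ω → ℝ) (hmeas : ∀ i, Measurable (Y i))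
    (hindep : iIndepFun Y μ)
    (hident : ∀ i, IdentDistrib (Y i) Y0 μ μ)
    (k : ℕ) (hk : k ∈ Finset.Icc 1 N) (hbin : 1 - δ ≤ binCDF N (1 - τ) (k - 1)) :
    1 - δ ≤ (μ {ω | kthLargest (fun i => Y i ω) k ≤ VaR μ Y0 τ}).toReal := by
  classical
  obtain ⟨hk1, hkN⟩ := Finset.mem_Icc.mp hk
  obtain ⟨hτ0, hτ1⟩ := hτ
  set v := VaR μ Y0 τ with hv
  set A : Fin N → Set Ω := fun i => {ω | Y i ω ≤ v} with hA
  have hAmeas : ∀ i, MeasurableSet (A i) := fun i => measurableSet_le (hmeas i) measurable_const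
  set R : ℝ≥0∞ := μ {ω | Y0 ω ≤ v} with hR
  have hRle : R ≤ 1 := prob_le_one
  have hRi : ∀ i, μ (A i) = R := by
    intro i
    have h1 := (hident i).map_eq
    calc μ (A i) = μ.map (Y i) (Set.Iic v) := by
          rw [Measure.map_apply (hmeas i) measurableSet_Iic]; rfl
      _ = μ.map Y0 (Set.Iic v) := by rw [h1]
      _ = R := by rw [Measure.map_apply hY0 measurableSet_Iic]; rfl
  -- product formula from independence
  have hprod : ∀ T : Finset (Fin N),
      μ (⋂ i, (if i ∈ T then A i else (A i)ᶜ)) = R ^ T.card * (1 - R) ^ (N - T.card) := by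
    intro T
    have hsets : ∀ i, (if i ∈ T then A i else (A i)ᶜ)
        = Y i ⁻¹' (if i ∈ T then Set.Iic v else Set.Ioi v) := by
      intro i
      by_cases hi : i ∈ T
      · simp only [hi, if_true]; rfl
      · simp only [hi, if_false]
        ext ω; simp [hA, not_le]
    have hiInter : (⋂ i, (if i ∈ T then A i else (A i)ᶜ))
        = ⋂ i, Y i ⁻¹' (if i ∈ T then Set.Iic v else Set.Ioi v) := by
      exact Set.iInter_congr hsets
    rw [hiInter, hindep.meas_iInter (fun i =>
      ⟨if i ∈ T then Set.Iic v else Set.Ioi v,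
        by by_cases hi : i ∈ T <;> simp [hi, measurableSet_Iic, measurableSet_Ioi], rfl⟩)]
    have hval : ∀ i, μ (Y i ⁻¹' (if i ∈ T then Set.Iic v else Set.Ioi v))
        = if i ∈ T then R else 1 - R := by
      intro i
      by_cases hi : i ∈ T
      · simp only [hi, if_true]
        rw [show Y i ⁻¹' Set.Iic v = A i from rfl, hRi i]
      · simp only [hi, if_false]
        have hcompl : Y i ⁻¹' Set.Ioi v = (A i)ᶜ := by ext ω; simp [hA, not_le]
        rw [hcompl, prob_compl_eq_one_sub (hAmeas i), hRi i]
    rw [Finset.prod_congr rfl (fun i _ => hval i), Finset.prod_ite, Finset.prod_const,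
      Finset.prod_const]
    congr 1
    · congr 1
      rw [Finset.filter_univ_mem]
    · congr 1
      rw [Finset.filter_not, Finset.card_sdiff_of_subset (Finset.subset_univ _)]
      congr 1
      · rw [Finset.card_univ, Fintype.card_fin]
      · rw [Finset.filter_univ_mem]
  have hcount := count_measure μ A hAmeas R hprod (N - k + 1)
  have hsubset : {ω | N - k + 1 ≤ (Finset.univ.filter fun i => ω ∈ A i).card}
      ⊆ {ω | kthLargest (fun i => Y i ω) k ≤ v} := by
    intro ω hω
    rw [Set.mem_setOf_eq] at hω ⊢
    apply kthLargest_le hk1 hkN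
    have hcc : (Finset.univ.filter fun i => (fun i => Y i ω) i ≤ v)
        = (Finset.univ.filter fun i => ω ∈ A i) := by
      apply Finset.filter_congr
      intro i _
      simp [hA]
    rw [hcc]
    exact hω
  have hmono : (∑ j ∈ Finset.Icc (N - k + 1) N, (N.choose j : ℝ≥0∞) * R ^ j * (1 - R) ^ (N - j))
      ≤ μ {ω | kthLargest (fun i => Y i ω) k ≤ v} := by
    rw [← hcount]
    exact measure_mono hsubset
  -- pass to real numbers
  set r : ℝ := R.toReal with hr
  have hr1 : r ≤ 1 := by
    rw [hr]
    calc R.toReal ≤ (1:ℝ≥0∞).toReal := ENNReal.toReal_mono one_ne_top hRle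
      _ = 1 := ENNReal.toReal_one
  have hrτ : τ ≤ r := tau_le_cdf_VaR μ Y0 hY0 τ hτ0 hτ1
  have hRnetop : R ≠ ⊤ := (hRle.trans_lt one_lt_top).ne
  have hQnetop : 1 - R ≠ ⊤ := (tsub_le_self.trans_lt one_lt_top).ne
  have hQtoReal : (1 - R).toReal = 1 - r := by
    rw [ENNReal.toReal_sub_of_le hRle one_ne_top, ENNReal.toReal_one]
  have hterm_ne : ∀ j ∈ Finset.Icc (N - k + 1) N,
      (N.choose j : ℝ≥0∞) * R ^ j * (1 - R) ^ (N - j) ≠ ⊤ := by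
    intro j _
    exact ENNReal.mul_ne_top (ENNReal.mul_ne_top (natCast_ne_top _) (ENNReal.pow_ne_top hRnetop))
      (ENNReal.pow_ne_top hQnetop)
  have hSto : (∑ j ∈ Finset.Icc (N - k + 1) N, (N.choose j : ℝ≥0∞) * R ^ j * (1 - R) ^ (N - j)).toReal
      = ∑ j ∈ Finset.Icc (N - k + 1) N, (N.choose j : ℝ) * r ^ j * (1 - r) ^ (N - j) := by
    rw [ENNReal.toReal_sum hterm_ne]
    refine Finset.sum_congr rfl fun j _ => ?_
    rw [ENNReal.toReal_mul, ENNReal.toReal_mul, ENNReal.toReal_pow, ENNReal.toReal_pow,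
      ENNReal.toReal_natCast, hQtoReal, hr]
  have hreindex : ∑ j ∈ Finset.Icc (N - k + 1) N, (N.choose j : ℝ) * r ^ j * (1 - r) ^ (N - j)
      = binCDF N (1 - r) (k - 1) := by
    rw [binCDF, show k - 1 + 1 = k from by omega]
    refine Finset.sum_nbij' (fun j => N - j) (fun i => N - i) ?_ ?_ ?_ ?_ ?_
    · intro j hj
      rw [Finset.mem_Icc] at hj
      rw [Finset.mem_range]
      omega
    · intro i hi
      rw [Finset.mem_range] at hi
      rw [Finset.mem_Icc]
      omega
    · intro j hj
      rw [Finset.mem_Icc] at hj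
      omega
    · intro i hi
      rw [Finset.mem_range] at hi
      omega
    · intro j hj
      rw [Finset.mem_Icc] at hj
      rw [Nat.choose_symm hj.2, _root_.sub_sub_cancel, show N - (N - j) = j from by omega]
      ring
  have hfinal : binCDF N (1 - τ) (k - 1) ≤ binCDF N (1 - r) (k - 1) := by
    apply binCDF_anti N (k - 1) (by omega) (by linarith) (by linarith) (by linarith)
  have hle2 : (∑ j ∈ Finset.Icc (N - k + 1) N, (N.choose j : ℝ≥0∞) * R ^ j * (1 - R) ^ (N - j)).toReal
      ≤ (μ {ω | kthLargest (fun i => Y i ω) k ≤ v}).toReal :=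
    ENNReal.toReal_mono (measure_ne_top μ _) hmono
  rw [hSto, hreindex] at hle2
  linarith
end

section
/- (Robust CVaR under one-sided distributional shift.) Let Y_true and Y_esti be real-valued random variables with CDFs F_true and F_esti, with Pr[Y_true ≥ b] = 1 and Pr[Y_esti ≥ b] = 1 for some finite b. Let τ ∈ (0,1) and ℓ ∈ [0, τ), and suppose sup_y (F_true(y) − F_esti(y)) ≤ ℓ. Then CVaR_τ(Y_true) ≥ (1/τ)[ ℓ·b + ∫₀^{τ−ℓ} VaR_ν(Y_esti) dν ]. -/
open MeasureTheory ProbabilityTheory Real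

section RobustCVaRAux


set_option linter.unusedVariables false
variable {Ω : Type*} [MeasurableSpace Ω] (μ : Measure Ω) [IsProbabilityMeasure μ]
  {Y : Ω → ℝ}

lemma cdfOf_mono : Monotone (cdfOf μ Y) := fun y y' h =>
  ENNReal.toReal_mono (measure_ne_top _ _) (measure_mono fun ω hω => le_trans hω h)

lemma cdfOf_eq_zero (hY : Measurable Y) {b y : ℝ} (hb : μ {ω | b ≤ Y ω} = 1) (hy : y < b) :
    cdfOf μ Y y = 0 := by
  have hms : MeasurableSet {ω | b ≤ Y ω} := hY measurableSet_Ici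
  have hc : μ {ω | b ≤ Y ω}ᶜ = 0 := by
    rw [measure_compl hms (measure_ne_top _ _), hb, measure_univ, tsub_self]
  have h0 : μ {ω | Y ω ≤ y} = 0 := by
    refine measure_mono_null (fun ω hω => ?_) hc
    simp only [Set.mem_compl_iff, Set.mem_setOf_eq] at *
    exact fun hb' => absurd (le_trans hb' hω) (not_le.2 hy)
  simp [cdfOf, h0]

lemma cdfOf_exists_gt (hY : Measurable Y) {ν : ℝ} (hν : ν < 1) : ∃ y, ν < cdfOf μ Y y := by
  have hmap : IsProbabilityMeasure (μ.map Y) := Measure.isProbabilityMeasure_map hY.aemeasurable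
  have h := (tendsto_cdf_atTop (μ.map Y)).eventually (eventually_gt_nhds hν)
  obtain ⟨y, hy⟩ := h.exists
  refine ⟨y, ?_⟩
  rwa [cdf_eq_real, measureReal_def, Measure.map_apply hY measurableSet_Iic] at hy

lemma bddAbove_cdf_set (hY : Measurable Y) {ν : ℝ} (hν : ν < 1) : BddAbove {y : ℝ | cdfOf μ Y y ≤ ν} := by
  obtain ⟨y0, hy0⟩ := cdfOf_exists_gt μ hY hν
  refine ⟨y0, fun y hy => ?_⟩
  by_contra hlt
  exact absurd (le_trans (cdfOf_mono μ (le_of_not_ge hlt)) hy) (not_le.2 hy0)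

lemma nonempty_cdf_set (hY : Measurable Y) {b ν : ℝ} (hb : μ {ω | b ≤ Y ω} = 1) (hν : 0 ≤ ν) :
    {y : ℝ | cdfOf μ Y y ≤ ν}.Nonempty :=
  ⟨b - 1, by rw [Set.mem_setOf_eq, cdfOf_eq_zero μ hY hb (sub_one_lt b)]; exact hν⟩

lemma le_VaR (hY : Measurable Y) {b ν : ℝ} (hb : μ {ω | b ≤ Y ω} = 1) (hν0 : 0 ≤ ν) (hν1 : ν < 1) :
    b ≤ VaR μ Y ν := by
  have h : sSup (Set.Iio b) ≤ VaR μ Y ν := by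
    refine csSup_le_csSup (bddAbove_cdf_set μ hY hν1) ⟨b - 1, sub_one_lt b⟩ fun y hy => ?_
    rw [Set.mem_setOf_eq, cdfOf_eq_zero μ hY hb hy]; exact hν0
  rwa [csSup_Iio] at h

lemma VaR_mono (hY : Measurable Y) {b ν ν' : ℝ} (hb : μ {ω | b ≤ Y ω} = 1) (h0 : 0 ≤ ν) (hνν' : ν ≤ ν')
    (h1 : ν' < 1) : VaR μ Y ν ≤ VaR μ Y ν' :=
  csSup_le_csSup (bddAbove_cdf_set μ hY h1) (nonempty_cdf_set μ hY hb h0)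
    (fun y hy => le_trans hy hνν')


end RobustCVaRAux

/-- Robust CVaR under one-sided distributional shift: if
`Pr[Y_true ≥ b] = 1`, `Pr[Y_esti ≥ b] = 1`, `τ ∈ (0,1)`, `ℓ ∈ [0,τ)`, and
`sup_y (F_true(y) - F_esti(y)) ≤ ℓ`, then
`CVaR_τ(Y_true) ≥ (1/τ)[ ℓ·b + ∫₀^{τ-ℓ} VaR_ν(Y_esti) dν ]`. -/
theorem robust_cvar_shift {Ω₁ Ω₂ : Type*} [MeasurableSpace Ω₁] [MeasurableSpace Ω₂]
    (μt : Measure Ω₁) [IsProbabilityMeasure μt] (μe : Measure Ω₂) [IsProbabilityMeasure μe]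
    (Yt : Ω₁ → ℝ) (Ye : Ω₂ → ℝ) (hYt : Measurable Yt) (hYe : Measurable Ye)
    (b : ℝ) (hbt : μt {ω | b ≤ Yt ω} = 1) (hbe : μe {ω | b ≤ Ye ω} = 1)
    (τ ℓ : ℝ) (hτ : τ ∈ Set.Ioo (0:ℝ) 1) (hℓ : ℓ ∈ Set.Ico (0:ℝ) τ)
    (hKS : ∀ y : ℝ, cdfOf μt Yt y - cdfOf μe Ye y ≤ ℓ) :
    (1 / τ) * (ℓ * b + ∫ ν in Set.Ioo (0:ℝ) (τ - ℓ), VaR μe Ye ν) ≤ CVaR μt Yt τ := by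
  rw [CVaR]
  obtain ⟨hτ0, hτ1⟩ := hτ
  obtain ⟨hℓ0, hℓτ⟩ := hℓ
  -- monotonicity of VaR_t on [0, τ]
  have hmonoT : MonotoneOn (VaR μt Yt) (Set.Icc 0 τ) := fun x hx y hy hxy =>
    VaR_mono μt hYt hbt hx.1 hxy (lt_of_le_of_lt hy.2 hτ1)
  have hmonoE : MonotoneOn (fun ν => VaR μe Ye (ν - ℓ)) (Set.Icc ℓ τ) := fun x hx y hy hxy =>
    VaR_mono μe hYe hbe (sub_nonneg.2 hx.1) (by linarith)
      (by have := hy.2; linarith)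
  -- interval integrability
  have hIt : IntervalIntegrable (VaR μt Yt) volume 0 τ := by
    apply MonotoneOn.intervalIntegrable
    rwa [Set.uIcc_of_le hτ0.le]
  have hIt1 : IntervalIntegrable (VaR μt Yt) volume 0 ℓ := by
    apply hIt.mono_set
    rw [Set.uIcc_of_le hℓ0, Set.uIcc_of_le hτ0.le]
    exact Set.Icc_subset_Icc le_rfl hℓτ.le
  have hIt2 : IntervalIntegrable (VaR μt Yt) volume ℓ τ := by
    apply hIt.mono_set
    rw [Set.uIcc_of_le hℓτ.le, Set.uIcc_of_le hτ0.le]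
    exact Set.Icc_subset_Icc hℓ0 le_rfl
  have hIe : IntervalIntegrable (fun ν => VaR μe Ye (ν - ℓ)) volume ℓ τ := by
    apply MonotoneOn.intervalIntegrable
    rwa [Set.uIcc_of_le hℓτ.le]
  -- pointwise bounds
  have hbT : ∀ ν ∈ Set.Icc (0:ℝ) ℓ, b ≤ VaR μt Yt ν := fun ν hν =>
    le_VaR μt hYt hbt hν.1 (lt_of_le_of_lt hν.2 (lt_trans hℓτ hτ1))
  have hshift : ∀ ν ∈ Set.Icc ℓ τ, VaR μe Ye (ν - ℓ) ≤ VaR μt Yt ν := by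
    intro ν hν
    refine csSup_le_csSup (bddAbove_cdf_set μt hYt (lt_of_le_of_lt hν.2 hτ1))
      (nonempty_cdf_set μe hYe hbe (sub_nonneg.2 hν.1)) fun y hy => ?_
    have := hKS y
    simp only [Set.mem_setOf_eq] at *
    linarith
  -- piece 1 : ℓ * b ≤ ∫ 0..ℓ VaR_t
  have h1 : ℓ * b ≤ ∫ ν in (0:ℝ)..ℓ, VaR μt Yt ν := by
    have := intervalIntegral.integral_mono_on (f := fun _ => b) (g := VaR μt Yt)
      hℓ0 intervalIntegrable_const hIt1 hbT
    rw [intervalIntegral.integral_const, sub_zero, smul_eq_mul] at this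
    linarith
  -- piece 2
  have h2 : (∫ ν in (0:ℝ)..(τ - ℓ), VaR μe Ye ν) ≤ ∫ ν in ℓ..τ, VaR μt Yt ν := by
    have he : (∫ ν in ℓ..τ, VaR μe Ye (ν - ℓ)) = ∫ ν in (0:ℝ)..(τ - ℓ), VaR μe Ye ν := by
      rw [intervalIntegral.integral_comp_sub_right (fun ν => VaR μe Ye ν) ℓ, sub_self]
    rw [← he]
    exact intervalIntegral.integral_mono_on hℓτ.le hIe hIt2 hshift
  -- assemble
  have hsplit : (∫ ν in (0:ℝ)..τ, VaR μt Yt ν)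
      = (∫ ν in (0:ℝ)..ℓ, VaR μt Yt ν) + ∫ ν in ℓ..τ, VaR μt Yt ν :=
    (intervalIntegral.integral_add_adjacent_intervals hIt1 hIt2).symm
  have hIooT : (∫ ν in Set.Ioo (0:ℝ) τ, VaR μt Yt ν) = ∫ ν in (0:ℝ)..τ, VaR μt Yt ν := by
    rw [intervalIntegral.integral_of_le hτ0.le, integral_Ioc_eq_integral_Ioo]
  have hIooE : (∫ ν in Set.Ioo (0:ℝ) (τ - ℓ), VaR μe Ye ν)
      = ∫ ν in (0:ℝ)..(τ - ℓ), VaR μe Ye ν := by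
    rw [intervalIntegral.integral_of_le (by linarith), integral_Ioc_eq_integral_Ioo]
  apply mul_le_mul_of_nonneg_left _ (by positivity)
  rw [hIooT, hIooE, hsplit]
  linarith
end
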